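/- arXiv:1901.04113 — 6 statements merged into one kernel-verified Lean document; each statement's English description precedes it below -/
import Mathlib

section
/- Let (R,m) be an F-finite reduced Noetherian local ring of prime characteristic p, let e ≥ 1 and q = p^e, and let φ : R → R be an additive map satisfying φ(r^q·x) = r·φ(x) for all r, x ∈ R (the twisted form of an R-linear map R^{1/q} → R). Suppose T is an ideal of R such that φ(T) ⊆ T, T ∩ R^o ≠ ∅, and T ⊆ J for every ideal J of R with φ(J) ⊆ J and J ∩ R^o ≠ ∅ (i.e., T = τ(R,φ) is the smallest φ-compatible ideal meeting R^o). Then T is a strong test ideal: T·(I*) = T·I for every ideal I of R. -/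
/-- The `q`-th Frobenius power `I^{[q]}` of an ideal `I`: the ideal generated by
the `q`-th powers of the elements of `I`. -/
def frobeniusPower {R : Type*} [CommRing R] (I : Ideal R) (q : ℕ) : Ideal R :=
  Ideal.span ((fun a => a ^ q) '' (I : Set R))

/-- `Rreg c` means `c ∈ R^o`, i.e. `c` avoids every minimal prime of `R`. -/
def Rreg {R : Type*} [CommRing R] (c : R) : Prop :=
  ∀ P ∈ minimalPrimes R, c ∉ P

/-- `x` lies in the tight closure `I*` of `I` (characteristic `p`):
there is `c ∈ R^o` with `c * x^(p^e) ∈ I^{[p^e]}` for all `e ≫ 0`. -/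
def InTightClosure {R : Type*} [CommRing R] (p : ℕ) (I : Ideal R) (x : R) : Prop :=
  ∃ c, Rreg c ∧ ∃ N : ℕ, ∀ e ≥ N, c * x ^ p ^ e ∈ frobeniusPower I (p ^ e)

/-- The tight closure `I*` of `I`, as an ideal: the span of the set of elements in the
tight closure (this set is already an ideal, so taking the span is harmless). -/
def tightClosure {R : Type*} [CommRing R] (p : ℕ) (I : Ideal R) : Ideal R :=
  Ideal.span {x | InTightClosure p I x}

/-!
If `x ∈ I*`, reducedness and prime avoidance give a single `d ∈ R^o` with
`d x^{p^e} ∈ I^{[p^e]}` for every `e`, so `g = c₀ d` (with `c₀ ∈ T ∩ R^o`) satisfies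
`g x^{q^n} ∈ T I^{[q^n]}` for all `n`.
The ideal of those `z` with `φ^n(R z x^{q^n}) ⊆ T I` for all `n` is `φ`-compatible, because
`φ(z) x^{q^n} = φ(z x^{q^{n+1}})`, and it contains `g ∈ R^o`; by minimality it contains `T`,
and the case `n = 0` gives `T x ⊆ T I`.
-/

open Set Function

section TightClosure

variable {R : Type*} [CommRing R]

lemma rreg_one : Rreg (1 : R) := fun _ hP => hP.1.1.one_notMem

lemma Rreg.mul {a b : R} (ha : Rreg a) (hb : Rreg b) : Rreg (a * b) :=
  fun P hP hab => (hP.1.1.mem_or_mem hab).elim (ha P hP) (hb P hP)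

lemma exists_mem_rreg_of_forall_not_le [IsNoetherianRing R] {A : Ideal R}
    (hA : ∀ P ∈ minimalPrimes R, ¬ A ≤ P) : ∃ c ∈ A, Rreg c := by
  by_contra! h
  have hcover : (A : Set R) ⊆ ⋃ P ∈ minimalPrimes R, (P : Set R) := fun a ha => by
    obtain ⟨P, hP, haP⟩ := not_forall₂.1 (h a ha)
    exact mem_biUnion hP (not_not.1 haP)
  obtain ⟨P, hP, hAP⟩ := (Ideal.subset_union_prime_finite (f := id)
    (minimalPrimes.finite_of_isNoetherianRing R) ⊥ ⊥ fun P hP _ _ => hP.1.1).1 hcover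
  exact hA P hP hAP

/-- Localizing a reduced ring at a minimal prime `P` gives a reduced ring with nil maximal ideal,
so `P` dies there. -/
lemma exists_notMem_mul_eq_zero_of_mem_minimalPrimes [IsReduced R] {P : Ideal R}
    (hP : P ∈ minimalPrimes R) {x : R} (hx : x ∈ P) : ∃ s ∉ P, s * x = 0 := by
  have := hP.1.1
  set f := algebraMap R (Localization.AtPrime P)
  have hnil : f x ∈ (⊥ : Ideal (Localization.AtPrime P)).radical := by
    rw [← Ideal.map_bot (f := f),
      IsLocalization.AtPrime.radical_map_of_mem_minimalPrimes _ P ⊥ hP]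
    exact Ideal.mem_map_of_mem f hx
  obtain ⟨s, hs⟩ := (IsLocalization.map_eq_zero_iff P.primeCompl _ x).1
    (by simpa [Ideal.mem_radical_iff] using hnil)
  exact ⟨s, s.2, hs⟩

lemma pow_mem_frobeniusPower (I : Ideal R) (q : ℕ) {a : R} (ha : a ∈ I) :
    a ^ q ∈ frobeniusPower I q :=
  Ideal.subset_span ⟨a, ha, rfl⟩

lemma frobeniusPower_le_of_dvd (I : Ideal R) {m n : ℕ} (hmn : m ∣ n) (hn : n ≠ 0) :
    frobeniusPower I n ≤ frobeniusPower I m := by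
  obtain ⟨k, rfl⟩ := hmn
  rw [frobeniusPower, Ideal.span_le]
  rintro _ ⟨a, ha, rfl⟩
  show a ^ (m * k) ∈ frobeniusPower I m
  rw [mul_comm, pow_mul]
  exact pow_mem_frobeniusPower I m
    (I.pow_mem_of_mem ha k (Nat.pos_of_ne_zero (right_ne_zero_of_mul hn)))

lemma le_tightClosure (p : ℕ) (I : Ideal R) : I ≤ tightClosure p I := fun x hx =>
  Ideal.subset_span ⟨1, rreg_one, 0, fun e _ => by
    simpa only [one_mul] using pow_mem_frobeniusPower I (p ^ e) hx⟩

lemma InTightClosure.exists_forall_mul_pow_mem [IsNoetherianRing R] [IsReduced R] {p : ℕ}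
    (hp : p ≠ 0) {I : Ideal R} {x : R} (hx : InTightClosure p I x) :
    ∃ d, Rreg d ∧ ∀ e, d * x ^ p ^ e ∈ frobeniusPower I (p ^ e) := by
  obtain ⟨c, hc, N, hN⟩ := hx
  let A : Ideal R := ⨅ e, (frobeniusPower I (p ^ e)).colon {x ^ p ^ e}
  have mem_A : ∀ a, a ∈ A ↔ ∀ e, a * x ^ p ^ e ∈ frobeniusPower I (p ^ e) := fun a => by
    simp only [A, Submodule.mem_iInf, Submodule.mem_colon_singleton, smul_eq_mul]
  suffices ∀ P ∈ minimalPrimes R, ¬ A ≤ P by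
    obtain ⟨d, hdA, hd⟩ := exists_mem_rreg_of_forall_not_le this
    exact ⟨d, hd, (mem_A d).1 hdA⟩
  intro P hP hAP
  have hPp := hP.1.1
  by_cases hxP : x ∈ P
  · obtain ⟨s, hsP, hsx⟩ := exists_notMem_mul_eq_zero_of_mem_minimalPrimes hP hxP
    refine hsP (hAP <| (mem_A s).2 fun e => ?_)
    obtain ⟨y, hy⟩ := dvd_pow_self x (pow_ne_zero e hp)
    rw [hy, ← mul_assoc, hsx, zero_mul]
    exact zero_mem _
  · refine hPp.mul_notMem (hc P hP) (mt (hPp.mem_of_pow_mem (p ^ N)) hxP)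
      (hAP <| (mem_A (c * x ^ p ^ N)).2 fun e => ?_)
    rcases le_total e N with heN | hNe
    · exact Ideal.mul_mem_right _ _ (frobeniusPower_le_of_dvd I (pow_dvd_pow p heN)
        (pow_ne_zero N hp) (hN N le_rfl))
    · rw [mul_right_comm]
      exact Ideal.mul_mem_right _ _ (hN e hNe)

end TightClosure

section FrobeniusLinear

variable {R : Type*} [CommRing R] {q : ℕ} {φ : R →+ R}

lemma iterate_pow_mul (hφ : ∀ r x : R, φ (r ^ q * x) = r * φ x) (n : ℕ) (r x : R) :
    φ^[n] (r ^ q ^ n * x) = r * φ^[n] x := by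
  induction n generalizing r with
  | zero => simp
  | succ n ih => simp only [iterate_succ_apply', pow_succ', pow_mul, ih, hφ]

/-- The largest ideal that `φ^[n]` maps into `K`. -/
def iterateCore (φ : R →+ R) (n : ℕ) (K : Ideal R) : Ideal R where
  carrier := {w | ∀ s, φ^[n] (s * w) ∈ K}
  add_mem' ha hb s := by simpa only [mul_add, iterate_map_add] using add_mem (ha s) (hb s)
  zero_mem' s := by simpa only [mul_zero, iterate_map_zero] using K.zero_mem
  smul_mem' r w hw s := by simpa only [smul_eq_mul, mul_assoc] using hw (s * r)

lemma mul_frobeniusPower_le_iterateCore (hφ : ∀ r x : R, φ (r ^ q * x) = r * φ x)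
    {T : Ideal R} (hT : MapsTo φ T T) (I : Ideal R) (n : ℕ) :
    T * frobeniusPower I (q ^ n) ≤ iterateCore φ n (T * I) := by
  conv_lhs => rw [← Ideal.span_eq T]
  rw [frobeniusPower, Ideal.span_mul_span', Ideal.span_le]
  rintro _ ⟨t, ht, _, ⟨a, ha, rfl⟩, rfl⟩ s
  rw [show s * (t * a ^ q ^ n) = a ^ q ^ n * (s * t) by ring, iterate_pow_mul hφ, mul_comm a]
  exact Ideal.mul_mem_mul (hT.iterate n (T.mul_mem_left s ht)) ha

def frobeniusColon (φ : R →+ R) (q : ℕ) (K : Ideal R) (x : R) : Ideal R :=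
  ⨅ n, (iterateCore φ n K).colon {x ^ q ^ n}

lemma mem_frobeniusColon {K : Ideal R} {x z : R} :
    z ∈ frobeniusColon φ q K x ↔ ∀ n, z * x ^ q ^ n ∈ iterateCore φ n K := by
  simp only [frobeniusColon, Submodule.mem_iInf, Submodule.mem_colon_singleton, smul_eq_mul]

lemma mapsTo_frobeniusColon (hφ : ∀ r x : R, φ (r ^ q * x) = r * φ x) (K : Ideal R) (x : R) :
    MapsTo φ (frobeniusColon φ q K x) (frobeniusColon φ q K x) := by
  intro z hz
  refine mem_frobeniusColon.2 fun n s => ?_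
  have hshift : s * (φ z * x ^ q ^ n) = φ (s ^ q * (z * x ^ q ^ (n + 1))) := by
    rw [pow_succ, pow_mul, show s ^ q * (z * (x ^ q ^ n) ^ q) = (s * x ^ q ^ n) ^ q * z by ring,
      hφ]
    ring
  rw [hshift, ← iterate_succ_apply]
  exact mem_frobeniusColon.1 hz (n + 1) (s ^ q)

lemma mul_mem_of_mem_frobeniusColon {K : Ideal R} {x z : R}
    (hz : z ∈ frobeniusColon φ q K x) : z * x ∈ K := by
  simpa using mem_frobeniusColon.1 hz 0 1

end FrobeniusLinear

theorem strong_test_ideal_of_phi_general {R : Type*} [CommRing R] [IsNoetherianRing R]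
    [IsReduced R] (p : ℕ) [Fact p.Prime]
    (e q : ℕ) (hq : q = p ^ e)
    (φ : R →+ R) (hφ : ∀ r x : R, φ (r ^ q * x) = r * φ x)
    (T : Ideal R)
    (hTcomp : ∀ x ∈ T, φ x ∈ T)
    (hTreg : ∃ c ∈ T, Rreg c)
    (hTmin : ∀ J : Ideal R, (∀ x ∈ J, φ x ∈ J) → (∃ c ∈ J, Rreg c) → T ≤ J) :
    ∀ I : Ideal R, T * tightClosure p I = T * I := by
  obtain ⟨c₀, hc₀T, hc₀⟩ := hTreg
  intro I
  refine le_antisymm ?_ (Ideal.mul_mono_right (le_tightClosure p I))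
  conv_lhs => rw [← Ideal.span_eq T]
  rw [tightClosure, Ideal.span_mul_span', Ideal.span_le]
  rintro _ ⟨c, hc, x, hx, rfl⟩
  obtain ⟨d, hd, hdx⟩ := hx.exists_forall_mul_pow_mem (Fact.out : p.Prime).ne_zero
  have hg : c₀ * d ∈ frobeniusColon φ q (T * I) x := mem_frobeniusColon.2 fun n =>
    mul_frobeniusPower_le_iterateCore hφ hTcomp I n <| by
      rw [mul_assoc, hq, ← pow_mul]
      exact Ideal.mul_mem_mul hc₀T (hdx (e * n))
  have hTle : T ≤ frobeniusColon φ q (T * I) x :=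
    hTmin _ (fun z hz => mapsTo_frobeniusColon hφ _ x hz) ⟨c₀ * d, hg, hc₀.mul hd⟩
  exact mul_mem_of_mem_frobeniusColon (hTle hc)

/-- If `T = τ(R,φ)` is the smallest `φ`-compatible ideal meeting `R^o`
(for an `R`-linear map `φ : R^{1/q} → R`, viewed as an additive map with `φ(r^q x) = r φ(x)`),
then `T` is a strong test ideal: `T · I* = T · I` for every ideal `I`. -/
theorem strong_test_ideal_of_phi {R : Type*} [CommRing R] [IsNoetherianRing R]
    [IsLocalRing R] [IsReduced R] (p : ℕ) [Fact p.Prime] [CharP R p]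
    (hFF : (frobenius R p).Finite)
    (e q : ℕ) (he : 1 ≤ e) (hq : q = p ^ e)
    (φ : R →+ R) (hφ : ∀ r x : R, φ (r ^ q * x) = r * φ x)
    (T : Ideal R)
    (hTcomp : ∀ x ∈ T, φ x ∈ T)
    (hTreg : ∃ c ∈ T, Rreg c)
    (hTmin : ∀ J : Ideal R, (∀ x ∈ J, φ x ∈ J) → (∃ c ∈ J, Rreg c) → T ≤ J) :
    ∀ I : Ideal R, T * tightClosure p I = T * I :=
  strong_test_ideal_of_phi_general p e q hq φ hφ T hTcomp hTreg hTmin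
end

section
/- Let R be a reduced Noetherian commutative ring of prime characteristic p. If R admits a strong test ideal T that is principal (T is generated by one element, T ∩ R^o ≠ ∅, and T·(I*) = T·I for every ideal I), then I* = I for every ideal I of R. -/
/-- In a reduced ring, an element of `R^o` is a nonzerodivisor. -/
lemma Rreg.eq_zero_of_mul_eq_zero {R : Type*} [CommRing R] [IsReduced R] {c z : R}
    (hc : Rreg c) (h : c * z = 0) : z = 0 := by
  have hz : IsNilpotent z := by
    rw [nilpotent_iff_mem_prime]
    intro J hJ
    obtain ⟨P, hP, hPJ⟩ := Ideal.exists_minimalPrimes_le (bot_le : ⊥ ≤ J)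
    have hPprime : P.IsPrime := hP.1.1
    have : c * z ∈ P := by rw [h]; exact P.zero_mem
    rcases hPprime.mem_or_mem this with hcP | hzP
    · exact absurd hcP (hc P hP)
    · exact hPJ hzP
  exact hz.eq_zero

/-- If a reduced Noetherian ring of characteristic `p` admits a principal
strong test ideal, then `I* = I` for every ideal `I`. -/
theorem tight_closure_trivial_of_principal_strong_test_ideal {R : Type*} [CommRing R]
    [IsNoetherianRing R] [IsReduced R] (p : ℕ) [Fact p.Prime] [CharP R p]
    (T : Ideal R)
    (hprin : Submodule.IsPrincipal T)
    (hTreg : ∃ c ∈ T, Rreg c)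
    (hstrong : ∀ I : Ideal R, T * tightClosure p I = T * I) :
    ∀ I : Ideal R, tightClosure p I = I := by
  obtain ⟨c, hcT, hcreg⟩ := hTreg
  obtain ⟨d, hd⟩ := hprin
  intro I
  apply le_antisymm
  · -- tightClosure ≤ I
    rw [tightClosure, Ideal.span_le]
    intro x hx
    have hxT : x ∈ tightClosure p I := Ideal.subset_span hx
    have hmem : d * x ∈ T * I := by
      rw [← hstrong I]
      exact Ideal.mul_mem_mul (hd ▸ Ideal.subset_span rfl) hxT
    rw [hd, Ideal.submodule_span_eq, Ideal.mem_span_singleton_mul] at hmem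
    obtain ⟨y, hyI, hdy⟩ := hmem
    -- d * (x - y) = 0
    have hdxy : d * (x - y) = 0 := by rw [mul_sub, hdy, sub_self]
    -- c = r * d for some r
    have hcT' : c ∈ Ideal.span ({d} : Set R) := by
      rw [← Ideal.submodule_span_eq, ← hd]; exact hcT
    rw [Ideal.mem_span_singleton'] at hcT'
    obtain ⟨r, hr⟩ := hcT'
    have : c * (x - y) = 0 := by rw [← hr, mul_assoc, hdxy, mul_zero]
    have hxy : x = y := sub_eq_zero.mp (hcreg.eq_zero_of_mul_eq_zero this)
    exact hxy ▸ hyI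
  · -- I ≤ tightClosure
    intro x hxI
    apply Ideal.subset_span
    refine ⟨c, hcreg, 0, fun e _ => ?_⟩
    exact Ideal.mul_mem_left _ c (Ideal.subset_span ⟨x, hxI, rfl⟩)
end

section
/- Let (R,m) be an F-finite Noetherian local domain of prime characteristic p, let e ≥ 1 and q = p^e, and let φ : R → R be a nonzero additive map satisfying φ(r^q·x) = r·φ(x) for all r, x ∈ R. Suppose c ≠ 0 in R has the property that for every d ≠ 0 there exist n ≥ 1 and s ∈ R with c = φ^{∘n}(d·s). Let T be the ideal of R generated by the set ⋃_{n ≥ 0} {φ^{∘n}(c·s) : s ∈ R} (with φ^{∘0} the identity). Then T is the smallest φ-compatible ideal of R meeting R^o: φ(T) ⊆ T, c ∈ T (so T ≠ 0), and T ⊆ J for every nonzero ideal J of R with φ(J) ⊆ J. Thus τ(R,φ) = Σ_{n ≥ 0} φ^n((cR)^{1/p^{ne}}). -/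
private lemma iter_twist {R : Type*} [CommRing R] (q : ℕ) (φ : R →+ R)
    (hφ : ∀ r x : R, φ (r ^ q * x) = r * φ x) :
    ∀ (n : ℕ) (r x : R), (⇑φ)^[n] (r ^ q ^ n * x) = r * (⇑φ)^[n] x := by
  intro n
  induction n with
  | zero => intro r x; simp
  | succ n ih =>
    intro r x
    rw [Function.iterate_succ_apply, Function.iterate_succ_apply]
    have : r ^ q ^ (n + 1) * x = (r ^ q ^ n) ^ q * x := by ring
    rw [this, hφ, ih]

/-- **Schwede.** With `c` a test element as in the Hochster–Huneke lemma,
the ideal `T = Σ_{n ≥ 0} φⁿ((cR)^{1/pⁿᵉ})` is the smallest `φ`-compatible nonzero ideal,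
i.e. `T = τ(R,φ)`. -/
theorem schwede_test_ideal_formula {R : Type*} [CommRing R] [IsDomain R]
    [IsNoetherianRing R] [IsLocalRing R] (p : ℕ) [Fact p.Prime] [CharP R p]
    (hFF : (frobenius R p).Finite)
    (e q : ℕ) (he : 1 ≤ e) (hq : q = p ^ e)
    (φ : R →+ R) (hφ : ∀ r x : R, φ (r ^ q * x) = r * φ x) (hφ0 : φ ≠ 0)
    (c : R) (hc : c ≠ 0)
    (hctest : ∀ d : R, d ≠ 0 → ∃ n : ℕ, 1 ≤ n ∧ ∃ s : R, c = (⇑φ)^[n] (d * s))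
    (T : Ideal R)
    (hT : T = Ideal.span {y : R | ∃ n : ℕ, ∃ s : R, y = (⇑φ)^[n] (c * s)}) :
    (∀ x ∈ T, φ x ∈ T) ∧ c ∈ T ∧
      ∀ J : Ideal R, J ≠ ⊥ → (∀ x ∈ J, φ x ∈ J) → T ≤ J := by
  have twist := iter_twist q φ hφ
  set S : Set R := {y : R | ∃ n : ℕ, ∃ s : R, y = (⇑φ)^[n] (c * s)} with hS
  refine ⟨?_, ?_, ?_⟩
  · -- φ-compatibility
    intro x hx
    rw [hT] at hx ⊢
    have key : ∀ r : R, φ (r * x) ∈ Ideal.span S := by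
      refine Submodule.span_induction ?_ ?_ ?_ ?_ hx
      · rintro y ⟨n, s, rfl⟩ r
        have : r * (⇑φ)^[n] (c * s) = (⇑φ)^[n] (c * (r ^ q ^ n * s)) := by
          rw [show c * (r ^ q ^ n * s) = r ^ q ^ n * (c * s) by ring, twist]
        rw [this, ← Function.iterate_succ_apply' φ]
        exact Ideal.subset_span ⟨n + 1, r ^ q ^ n * s, rfl⟩
      · intro r; simp
      · intro a b _ _ ha hb r
        rw [mul_add, map_add]
        exact Ideal.add_mem _ (ha r) (hb r)
      · intro r a _ ha r'
        have : r' * (r • a) = (r' * r) * a := by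
          simp [smul_eq_mul]; ring
        rw [this]; exact ha (r' * r)
    simpa using key 1
  · rw [hT]
    exact Ideal.subset_span ⟨0, 1, by simp⟩
  · intro J hJ hJφ
    obtain ⟨d, hdJ, hd⟩ := Submodule.exists_mem_ne_zero_of_ne_bot hJ
    have iterJ : ∀ (n : ℕ) (y : R), y ∈ J → (⇑φ)^[n] y ∈ J := by
      intro n
      induction n with
      | zero => intro y hy; simpa using hy
      | succ n ih =>
        intro y hy
        rw [Function.iterate_succ_apply' φ]
        exact hJφ _ (ih y hy)
    obtain ⟨n, _, s, hcs⟩ := hctest d hd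
    have hcJ : c ∈ J := hcs ▸ iterJ n _ (J.mul_mem_right s hdJ)
    rw [hT]
    refine Ideal.span_le.mpr ?_
    rintro y ⟨n, s, rfl⟩
    exact iterJ n _ (J.mul_mem_right s hcJ)
end

section
/- Let R be a Noetherian commutative ring of prime characteristic p, let e ≥ 1 and q = p^e, and let φ : R → R be an additive map satisfying φ(r^q·x) = r·φ(x) for all r, x ∈ R. Let T be an ideal of R with φ(T) ⊆ T. Then the ideal J = ⋂_I (T·I :_R I*), where the intersection runs over all ideals I of R, is φ-compatible: φ(J) ⊆ J. -/
/-- Auxiliary: `φ` maps `T * I^{[q]}` into `T * I`. -/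
lemma phi_maps_mul_frob {R : Type*} [CommRing R] (q : ℕ)
    (φ : R →+ R) (hφ : ∀ r x : R, φ (r ^ q * x) = r * φ x)
    (T I : Ideal R) (hTcomp : ∀ x ∈ T, φ x ∈ T) :
    ∀ w ∈ T * frobeniusPower I q, φ w ∈ T * I := by
  have key : ∀ n ∈ frobeniusPower I q, ∀ m ∈ T, φ (n * m) ∈ T * I := by
    intro n hn
    induction hn using Submodule.span_induction with
    | mem z hz =>
      obtain ⟨a, ha, rfl⟩ := hz
      intro m hm
      rw [hφ a m, mul_comm a (φ m)]
      exact Ideal.mul_mem_mul (hTcomp m hm) ha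
    | zero => intro m hm; simp
    | add a b _ _ ha hb =>
      intro m hm
      rw [add_mul, map_add]
      exact Ideal.add_mem _ (ha m hm) (hb m hm)
    | smul r a _ ha =>
      intro m hm
      have : r • a * m = a * (r * m) := by rw [smul_eq_mul]; ring
      rw [this]
      exact ha (r * m) (Ideal.mul_mem_left T r hm)
  intro w hw
  refine Submodule.mul_induction_on hw ?_ ?_
  · intro m hm n hn
    rw [mul_comm m n]
    exact key n hn m hm
  · intro a b ha hb
    rw [map_add]
    exact Ideal.add_mem _ ha hb

/-- Auxiliary: if `z ∈ I*` then `z^q ∈ (I^{[q]})*`. -/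
lemma pow_mem_tightClosure_frob {R : Type*} [CommRing R]
    (p : ℕ) [Fact p.Prime] [CharP R p] (e q : ℕ) (hq : q = p ^ e)
    (I : Ideal R) (z : R) (hz : InTightClosure p I z) :
    InTightClosure p (frobeniusPower I q) (z ^ q) := by
  obtain ⟨c, hc, N, hN⟩ := hz
  refine ⟨c ^ q, ?_, N, ?_⟩
  · intro P hP hmem
    exact hc P hP (hP.1.1.mem_of_pow_mem _ hmem)
  · intro n hn
    have h := hN n hn
    have hf : Ideal.map (iterateFrobenius R p e) (frobeniusPower I (p ^ n)) ≤
        frobeniusPower (frobeniusPower I q) (p ^ n) := by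
      rw [frobeniusPower, Ideal.map_span]
      apply Ideal.span_mono
      rintro _ ⟨_, ⟨a, ha, rfl⟩, rfl⟩
      refine ⟨a ^ q, Ideal.subset_span ⟨a, ha, rfl⟩, ?_⟩
      simp only [iterateFrobenius_def, ← pow_mul, ← hq]
      rw [mul_comm]
    have hmem : iterateFrobenius R p e (c * z ^ p ^ n) ∈
        Ideal.map (iterateFrobenius R p e) (frobeniusPower I (p ^ n)) :=
      Ideal.mem_map_of_mem _ h
    have heq : c ^ q * (z ^ q) ^ p ^ n = iterateFrobenius R p e (c * z ^ p ^ n) := by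
      rw [map_mul, iterateFrobenius_def, iterateFrobenius_def, ← hq, ← pow_mul, ← pow_mul,
        mul_comm q (p ^ n)]
    rw [heq]
    exact hf hmem

/-- If `T` is `φ`-compatible, then `J = ⋂_I (T·I :_R I*)` is
`φ`-compatible. -/
theorem inter_colon_is_phi_compatible {R : Type*} [CommRing R] [IsNoetherianRing R]
    (p : ℕ) [Fact p.Prime] [CharP R p]
    (e q : ℕ) (he : 1 ≤ e) (hq : q = p ^ e)
    (φ : R →+ R) (hφ : ∀ r x : R, φ (r ^ q * x) = r * φ x)
    (T : Ideal R) (hTcomp : ∀ x ∈ T, φ x ∈ T) :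
    ∀ x ∈ ⨅ I : Ideal R, Submodule.colon (T * I) (tightClosure p I),
      φ x ∈ ⨅ I : Ideal R, Submodule.colon (T * I) (tightClosure p I) := by
  intro x hx
  rw [Submodule.mem_iInf] at hx ⊢
  intro I
  rw [Submodule.mem_colon]
  intro z hz
  induction hz using Submodule.span_induction with
  | mem z hz =>
    have hzq : (z : R) ^ q ∈ tightClosure p (frobeniusPower I q) :=
      Ideal.subset_span (pow_mem_tightClosure_frob p e q hq I z hz)
    have hx' := hx (frobeniusPower I q)
    rw [Submodule.mem_colon] at hx'
    have h1 : z ^ q * x ∈ T * frobeniusPower I q := by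
      have := hx' _ hzq
      simpa [smul_eq_mul, mul_comm] using this
    have h2 := phi_maps_mul_frob q φ hφ T I hTcomp _ h1
    rw [hφ z x] at h2
    simpa [smul_eq_mul, mul_comm] using h2
  | zero => simp
  | add a b _ _ ha hb => rw [smul_add]; exact Ideal.add_mem _ ha hb
  | smul r a _ ha =>
    simp only [smul_eq_mul] at ha ⊢
    rw [mul_comm r a, ← mul_assoc]
    exact Ideal.mul_mem_right _ _ ha
end

section
/- Let k be a perfect field of prime characteristic p, S = k[[x_1,…,x_n]], and q = p^e with e ≥ 1. Let h ∈ S and write h = Σ_a (h_a)^q · x^a, where a = (a_1,…,a_n) ranges over exponent vectors with 0 ≤ a_i ≤ q−1, x^a = x_1^{a_1}⋯x_n^{a_n}, and h_a ∈ S (such a decomposition exists since k is perfect). Then the ideal generated by the elements h_a is the smallest ideal whose q-th Frobenius power contains h: h belongs to ((h_a : a))^{[q]}, and for every ideal J of S with h ∈ J^{[q]}, each h_a belongs to J. In other words, I_e((h)) = (h_a : a). -/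
theorem Nat.eq_of_dvd_mul_add_sub {q m a b : ℕ} (ha : a < q) (hb : b < q) (hle : b ≤ q * m + a)
    (h : q ∣ q * m + a - b) : a = b := by
  obtain ⟨c, hc⟩ := h
  have hsum : q * c + b = q * m + a := by omega
  have := congrArg (· % q) hsum
  simpa [Nat.mul_add_mod, Nat.mod_eq_of_lt ha, Nat.mod_eq_of_lt hb] using this.symm

namespace MvPowerSeries

variable {σ R : Type*} [CommRing R] (p e : ℕ)

section ExpChar

variable [ExpChar R p]

theorem coeff_pow_expChar_pow_nsmul (f : MvPowerSeries σ R) (m : σ →₀ ℕ) :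
    coeff (p ^ e • m) (f ^ p ^ e) = coeff m f ^ p ^ e := by
  rw [← map_iterateFrobenius_expand p (expChar_ne_zero R p), coeff_map, coeff_expand_smul,
    iterateFrobenius_def]

theorem coeff_pow_expChar_pow_of_not_dvd (f : MvPowerSeries σ R) {m : σ →₀ ℕ} {i : σ}
    (h : ¬ p ^ e ∣ m i) : coeff m (f ^ p ^ e) = 0 := by
  rw [← map_iterateFrobenius_expand p (expChar_ne_zero R p), coeff_map,
    coeff_expand_of_not_dvd _ _ _ h, map_zero]

end ExpChar

section Finite

variable [Fintype σ]

noncomputable def finExponent {q : ℕ} (a : σ → Fin q) : σ →₀ ℕ :=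
  Finsupp.equivFunOnFinite.symm fun i => a i

@[simp]
theorem finExponent_apply {q : ℕ} (a : σ → Fin q) (i : σ) : finExponent a i = a i := rfl

theorem prod_X_pow_eq_monomial {q : ℕ} (a : σ → Fin q) :
    ∏ i, (X i : MvPowerSeries σ R) ^ (a i : ℕ) = monomial (finExponent a) 1 := by
  rw [monomial_eq', Finsupp.prod_fintype _ _ (fun _ => pow_zero _)]
  simp

section

variable [ExpChar R p] [PerfectRing R p]

noncomputable def frobeniusComponent (a : σ → Fin (p ^ e)) :
    MvPowerSeries σ R →+ MvPowerSeries σ R where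
  toFun f m := (iterateFrobeniusEquiv R p e).symm (coeff (p ^ e • m + finExponent a) f)
  map_zero' := by funext m; simp only [map_zero]; rfl
  map_add' f g := by funext m; simp only [map_add]; rfl

theorem coeff_frobeniusComponent (a : σ → Fin (p ^ e)) (f : MvPowerSeries σ R) (m : σ →₀ ℕ) :
    coeff m (frobeniusComponent p e a f) =
      (iterateFrobeniusEquiv R p e).symm (coeff (p ^ e • m + finExponent a) f) := rfl

end

variable [DecidableEq σ]

noncomputable def ofFrobeniusComponents (u : (σ → Fin (p ^ e)) → MvPowerSeries σ R) :
    MvPowerSeries σ R :=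
  ∑ b, u b ^ p ^ e * monomial (finExponent b) 1

theorem ofFrobeniusComponents_mem_frobeniusPower (u : (σ → Fin (p ^ e)) → MvPowerSeries σ R) :
    ofFrobeniusComponents p e u ∈ frobeniusPower (Ideal.span (Set.range u)) (p ^ e) :=
  Ideal.sum_mem _ fun b _ => Ideal.mul_mem_right _ _ <|
    Ideal.subset_span ⟨u b, Ideal.subset_span ⟨b, rfl⟩, rfl⟩

variable [ExpChar R p]

theorem coeff_ofFrobeniusComponents (u : (σ → Fin (p ^ e)) → MvPowerSeries σ R)
    (a : σ → Fin (p ^ e)) (m : σ →₀ ℕ) :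
    coeff (p ^ e • m + finExponent a) (ofFrobeniusComponents p e u) = coeff m (u a) ^ p ^ e := by
  rw [ofFrobeniusComponents, map_sum, Finset.sum_eq_single_of_mem a (Finset.mem_univ a)]
  · rw [coeff_mul_monomial, if_pos le_add_self, add_tsub_cancel_right, mul_one,
      coeff_pow_expChar_pow_nsmul]
  intro b _ hba
  obtain ⟨i, hi⟩ := Function.ne_iff.mp hba
  rw [coeff_mul_monomial]
  split_ifs with hle
  · refine mul_eq_zero_of_left (coeff_pow_expChar_pow_of_not_dvd p e _ (i := i) fun hdvd => ?_) _
    refine hi (Fin.ext (Nat.eq_of_dvd_mul_add_sub (a i).isLt (b i).isLt (hle i) ?_).symm)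
    simpa using hdvd
  · rfl

variable [PerfectRing R p]

theorem frobeniusComponent_ofFrobeniusComponents (u : (σ → Fin (p ^ e)) → MvPowerSeries σ R)
    (a : σ → Fin (p ^ e)) : frobeniusComponent p e a (ofFrobeniusComponents p e u) = u a := by
  ext m
  rw [coeff_frobeniusComponent, coeff_ofFrobeniusComponents, ← iterateFrobeniusEquiv_def,
    RingEquiv.symm_apply_apply]

theorem ofFrobeniusComponents_frobeniusComponent (f : MvPowerSeries σ R) :
    ofFrobeniusComponents p e (fun a => frobeniusComponent p e a f) = f := by
  ext m
  have hq : 0 < p ^ e := pow_pos (expChar_pos R p) e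
  let r : σ → Fin (p ^ e) := fun i => ⟨m i % p ^ e, Nat.mod_lt _ hq⟩
  have hm : m = p ^ e • Finsupp.equivFunOnFinite.symm (fun i => m i / p ^ e) + finExponent r := by
    ext i
    simp [r, Nat.div_add_mod]
  rw [hm, coeff_ofFrobeniusComponents, coeff_frobeniusComponent, ← iterateFrobeniusEquiv_def,
    RingEquiv.apply_symm_apply]

theorem frobeniusComponent_mul_pow (a : σ → Fin (p ^ e)) (f g : MvPowerSeries σ R) :
    frobeniusComponent p e a (f * g ^ p ^ e) = frobeniusComponent p e a f * g := by
  have : f * g ^ p ^ e = ofFrobeniusComponents p e (fun b => frobeniusComponent p e b f * g) := by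
    conv_lhs => rw [← ofFrobeniusComponents_frobeniusComponent p e f]
    simp only [ofFrobeniusComponents, Finset.sum_mul, mul_pow]
    exact Finset.sum_congr rfl fun b _ => by ring
  rw [this, frobeniusComponent_ofFrobeniusComponents]

theorem frobeniusComponent_mem_of_mem_frobeniusPower {J : Ideal (MvPowerSeries σ R)}
    {f : MvPowerSeries σ R} (hf : f ∈ frobeniusPower J (p ^ e)) (a : σ → Fin (p ^ e)) :
    frobeniusComponent p e a f ∈ J := by
  -- generalised over the multiplier `c`, which the `smul` step of the induction absorbs
  suffices ∀ c, frobeniusComponent p e a (c * f) ∈ J by simpa using this 1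
  induction hf using Submodule.span_induction with
  | mem _ hx =>
    obtain ⟨y, hy, rfl⟩ := hx
    exact fun c => (frobeniusComponent_mul_pow p e a c y).symm ▸ J.mul_mem_left _ hy
  | zero => simp
  | add _ _ _ _ hx hy => exact fun c => by rw [mul_add, map_add]; exact J.add_mem (hx c) (hy c)
  | smul d _ _ hx => exact fun c => by rw [smul_eq_mul, ← mul_assoc]; exact hx (c * d)

end Finite

end MvPowerSeries

theorem root_ideal_of_element_general {k : Type*} [Field k] (p : ℕ) [Fact p.Prime]
    [CharP k p] [PerfectRing k p] (n : ℕ) (e q : ℕ) (hq : q = p ^ e)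
    (h : MvPowerSeries (Fin n) k)
    (h_ : (Fin n → Fin q) → MvPowerSeries (Fin n) k)
    (hdecomp : h = ∑ a : Fin n → Fin q,
      (h_ a) ^ q * ∏ i : Fin n, (MvPowerSeries.X i : MvPowerSeries (Fin n) k) ^ (a i : ℕ)) :
    h ∈ frobeniusPower (Ideal.span (Set.range h_)) q ∧
      ∀ J : Ideal (MvPowerSeries (Fin n) k), h ∈ frobeniusPower J q →
        ∀ a : Fin n → Fin q, h_ a ∈ J := by
  subst hq
  simp only [MvPowerSeries.prod_X_pow_eq_monomial] at hdecomp
  rw [← MvPowerSeries.ofFrobeniusComponents] at hdecomp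
  subst hdecomp
  refine ⟨MvPowerSeries.ofFrobeniusComponents_mem_frobeniusPower p e h_, fun J hJ a => ?_⟩
  rw [← MvPowerSeries.frobeniusComponent_ofFrobeniusComponents p e h_ a]
  exact MvPowerSeries.frobeniusComponent_mem_of_mem_frobeniusPower p e hJ a

/-- **Blickle–Katzman.** If `h = Σ_a (h_a)^q x^a`, where `a` runs over the
exponent vectors with `0 ≤ aᵢ ≤ q−1`, then the ideal generated by the `h_a` is the smallest
ideal whose `q`-th Frobenius power contains `h`: `I_e((h)) = (h_a : a)`. -/
theorem root_ideal_of_element {k : Type*} [Field k] (p : ℕ) [Fact p.Prime]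
    [CharP k p] [PerfectRing k p] (n : ℕ) (e q : ℕ) (he : 1 ≤ e) (hq : q = p ^ e)
    (h : MvPowerSeries (Fin n) k)
    (h_ : (Fin n → Fin q) → MvPowerSeries (Fin n) k)
    (hdecomp : h = ∑ a : Fin n → Fin q,
      (h_ a) ^ q * ∏ i : Fin n, (MvPowerSeries.X i : MvPowerSeries (Fin n) k) ^ (a i : ℕ)) :
    h ∈ frobeniusPower (Ideal.span (Set.range h_)) q ∧
      ∀ J : Ideal (MvPowerSeries (Fin n) k), h ∈ frobeniusPower J q →
        ∀ a : Fin n → Fin q, h_ a ∈ J :=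
  root_ideal_of_element_general p n e q hq h h_ hdecomp
end

section
/- Let k be a perfect field of prime characteristic p, S = k[[x_1,…,x_n]], let Δ be a simplicial complex on {1,…,n} with exactly m facets, let I = I_Δ ⊆ S be its Stanley–Reisner ideal (the ideal generated by the square-free monomials ∏_{i∈G} x_i for G ∉ Δ), and let R = S/I. Then R is f_max(Δ)-tight with f_max(Δ) = m: for every ideal J of R and every x ∈ J*, there exist a_1, …, a_m ∈ R with a_i ∈ J^i and x^m + a_1·x^{m−1} + ⋯ + a_m = 0. -/
set_option synthInstance.maxHeartbeats 1000000
set_option maxHeartbeats 1000000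

/-- The Stanley–Reisner ideal of a simplicial complex `Δ` on `{1,…,n}`: the ideal of
`k[[x₁,…,xₙ]]` generated by the square-free monomials `∏_{i∈G} xᵢ` with `G ∉ Δ`. -/
noncomputable def stanleyReisnerIdeal (k : Type*) [Field k] {n : ℕ} (Δ : Finset (Finset (Fin n))) :
    Ideal (MvPowerSeries (Fin n) k) :=
  Ideal.span {f | ∃ G : Finset (Fin n), G ∉ Δ ∧
    f = ∏ i ∈ G, (MvPowerSeries.X i : MvPowerSeries (Fin n) k)}

/-!
For a facet `F` of `Δ` let `P_F` be the kernel of the endomorphism of `S` killing the variables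
outside `F`, so that `S ⧸ P_F ≅ k[[xᵢ : i ∈ F]]`. The `P_F` are minimal primes of `I_Δ` and
`⋂_F P_F = I_Δ`. The multiplier `c ∈ R°` avoids every `P_F`, so `c x^q ∈ J^[q]` persists modulo
`P_F`, and there it forces `x ∈ J + P_F` because power series over a perfect field are F-regular:
take an exponent `u` at which `c` has a nonzero coefficient and `q = p^e > u`; the additive map
taking `q`-th roots of the coefficients at the exponents `q • b + u` is `p⁻ᵉ`-linear, hence sends
`J^[q]` into `J` and `c x^q` to `x` times a unit. Writing `x = y_F + (element of P_F)` with
`y_F ∈ J`, the product `∏_F (x - y_F)` lies in `⋂_F P_F = I_Δ`, and expanding it gives the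
equation.
-/

open Finset

theorem exists_pow_add_sum_eq_prod_sub {R : Type*} [CommRing R] (J : Ideal R) (x : R)
    {ι : Type*} (s : Finset ι) (y : ι → R) (hy : ∀ i ∈ s, y i ∈ J) :
    ∃ a : ℕ → R, (∀ i, a i ∈ J ^ i) ∧
      ∏ i ∈ s, (x - y i) = x ^ #s + ∑ i ∈ Icc 1 #s, a i * x ^ (#s - i) := by
  refine ⟨fun i => (-1) ^ i * (s.val.map y).esymm i, fun i => ?_, ?_⟩
  · refine (J ^ i).mul_mem_left _ ?_
    rw [Finset.esymm_map_val]
    refine Ideal.sum_mem _ fun t ht => ?_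
    rw [mem_powersetCard] at ht
    rw [← ht.2, ← prod_const]
    exact Ideal.prod_mem_prod fun j hj => hy j (ht.1 hj)
  · have vieta := congrArg (Polynomial.eval x) (Multiset.prod_X_sub_X_eq_sum_esymm (s.val.map y))
    simp only [Multiset.map_map, Function.comp_def, Polynomial.eval_multiset_prod,
      Polynomial.eval_sub, Polynomial.eval_X, Polynomial.eval_C,
      Polynomial.eval_finsetSum, Polynomial.eval_mul, Polynomial.eval_pow, Polynomial.eval_neg,
      Polynomial.eval_one, Multiset.card_map, card_val] at vieta
    rw [prod_eq_multiset_prod, vieta, sum_range_succ', add_comm, ← Finset.Ico_add_one_right_eq_Icc,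
      sum_Ico_eq_sum_range]
    simp [add_comm 1, mul_assoc, Finset.esymm_map_val]

theorem map_frobeniusPower_le {R S : Type*} [CommRing R] [CommRing S] (f : R →+* S)
    (J : Ideal R) (q : ℕ) : (frobeniusPower J q).map f ≤ frobeniusPower (J.map f) q := by
  rw [frobeniusPower, Ideal.map_span, Ideal.span_le]
  rintro _ ⟨_, ⟨a, ha, rfl⟩, rfl⟩
  exact Ideal.subset_span ⟨f a, Ideal.mem_map_of_mem f ha, (map_pow f a q).symm⟩

theorem Ideal.mem_sup_ker_of_map_mem {A B : Type*} [CommRing A] [CommRing B] {f : A →+* B}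
    (g : B →+* A) (hfg : ∀ a, f (g (f a)) = f a) {J : Ideal A} {x : A} (hx : f x ∈ J.map f) :
    x ∈ J ⊔ RingHom.ker f := by
  have hker : ∀ a, a - g (f a) ∈ J ⊔ RingHom.ker f := fun a =>
    Ideal.mem_sup_right (by rw [RingHom.mem_ker, map_sub, hfg, sub_self])
  have hmap : J.map f ≤ (J ⊔ RingHom.ker f).comap g := by
    rw [Ideal.map_le_iff_le_comap]
    intro a ha
    simpa using (J ⊔ RingHom.ker f).sub_mem (Ideal.mem_sup_left ha) (hker a)
  simpa using (J ⊔ RingHom.ker f).add_mem (hker x) (hmap hx)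

theorem Ideal.ker_quotient_lift_mem_minimalPrimes {A B : Type*} [CommRing A] [CommRing B]
    {I : Ideal A} (φ : A →+* B) (hI : I ≤ RingHom.ker φ) (h : RingHom.ker φ ∈ I.minimalPrimes) :
    RingHom.ker (Ideal.Quotient.lift I φ hI) ∈ minimalPrimes (A ⧸ I) := by
  rw [Ideal.minimalPrimes_eq_comap] at h
  obtain ⟨P, hP, hPφ⟩ := h
  convert hP
  refine Ideal.comap_injective_of_surjective _ Ideal.Quotient.mk_surjective ?_
  rw [hPφ, RingHom.comap_ker]
  rfl

theorem Nat.le_and_eq_of_mul_add_eq_mul_add {q d w b u : ℕ} (hu : u < q)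
    (h : q * d + w = q * b + u) :
    d ≤ b ∧ w = q * (b - d) + u := by
  have hd : d ≤ b := by
    by_contra! hbd
    have := Nat.mul_le_mul_left q (Nat.succ_le_of_lt hbd)
    rw [Nat.mul_succ] at this
    omega
  refine ⟨hd, ?_⟩
  have := Nat.mul_le_mul_left q hd
  rw [Nat.mul_sub]
  omega

theorem Finsupp.sum_support_single_one_le {σ : Type*} (a : σ →₀ ℕ) :
    ∑ i ∈ a.support, single i 1 ≤ a := by
  classical
  intro i
  rw [finsetSum_apply, Finset.sum_congr rfl fun j _ => single_apply, Finset.sum_ite_eq']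
  split_ifs with hi
  · exact Nat.one_le_iff_ne_zero.mpr (mem_support_iff.mp hi)
  · exact Nat.zero_le _

namespace MvPowerSeries

variable {σ R : Type*} [CommRing R]

/-- `f = ∑_{u < q} X ^ u * expand q (component q u f)`, the sum running over the exponents
`u` with all `u i < q`. -/
noncomputable def component (q : ℕ) (u : σ →₀ ℕ) : MvPowerSeries σ R →+ MvPowerSeries σ R where
  toFun f b := coeff (q • b + u) f
  map_zero' := rfl
  map_add' _ _ := rfl

theorem coeff_component (q : ℕ) (u b : σ →₀ ℕ) (f : MvPowerSeries σ R) :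
    coeff b (component q u f) = coeff (q • b + u) f := rfl

theorem component_expand_mul {q : ℕ} (hq : q ≠ 0) {u : σ →₀ ℕ} (hu : ∀ i, u i < q)
    (g f : MvPowerSeries σ R) :
    component q u (expand q hq g * f) = g * component q u f := by
  classical
  ext b
  set e : (σ →₀ ℕ) × (σ →₀ ℕ) → (σ →₀ ℕ) × (σ →₀ ℕ) := fun x => (q • x.1, q • x.2 + u)
  have he : Function.Injective e := by
    rintro ⟨d, w⟩ ⟨d', w'⟩ h
    simp only [e, Prod.mk.injEq, add_left_inj] at h
    simp [nsmul_right_injective hq h.1, nsmul_right_injective hq h.2]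
  rw [coeff_component, coeff_mul, coeff_mul, ← Finset.sum_subset (s₁ := (antidiagonal b).image e),
    Finset.sum_image fun x _ y _ h => he h]
  · refine Finset.sum_congr rfl fun x _ => ?_
    simp [e, coeff_component]
  · intro x hx
    obtain ⟨d, hd, rfl⟩ := Finset.mem_image.mp hx
    rw [HasAntidiagonal.mem_antidiagonal] at hd ⊢
    simp only [e, ← hd, smul_add, add_assoc]
  -- A term with `coeff v (expand q g) ≠ 0` has `v = q • d`, and then `u < q` forces
  -- `(v, w) = e (d, b - d)`.
  · rintro ⟨v, w⟩ hvw hnot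
    by_contra hne
    obtain ⟨d, -, rfl⟩ := support_expand_subset q hq g (left_ne_zero_of_mul hne)
    refine hnot (Finset.mem_image.mpr ⟨(d, b - d), ?_⟩)
    have key i := Nat.le_and_eq_of_mul_add_eq_mul_add (hu i)
      (by simpa using DFunLike.congr_fun (HasAntidiagonal.mem_antidiagonal.mp hvw) i)
    refine ⟨HasAntidiagonal.mem_antidiagonal.mpr ?_, ?_⟩
    · ext i; simp [(key i).1]
    · ext i <;> simp [e, (key i).2]

theorem monomial_dvd_of_coeff_ne_zero {n : σ →₀ ℕ} {φ : MvPowerSeries σ R}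
    (h : ∀ a, coeff a φ ≠ 0 → n ≤ a) : monomial n 1 ∣ φ := by
  refine ⟨component 1 n φ, ext fun a => ?_⟩
  rw [coeff_monomial_mul]
  split_ifs with hna
  · rw [one_mul, coeff_component, one_smul, tsub_add_cancel_of_le hna]
  · by_contra hne
    exact hna (h a hne)

theorem prod_X_eq_monomial (G : Finset σ) :
    ∏ i ∈ G, (X i : MvPowerSeries σ R) = monomial (∑ i ∈ G, Finsupp.single i 1) 1 := by
  simp_rw [X_def, prod_monomial, prod_const_one]

noncomputable def filter (P : (σ →₀ ℕ) → Prop) [DecidablePred P] (f : MvPowerSeries σ R) :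
    MvPowerSeries σ R :=
  fun b => if P b then coeff b f else 0

theorem coeff_filter (P : (σ →₀ ℕ) → Prop) [DecidablePred P] (b : σ →₀ ℕ) (f : MvPowerSeries σ R) :
    coeff b (f.filter P) = if P b then coeff b f else 0 := rfl

section

variable [DecidableEq σ]

theorem sum_filter_support_eq [Fintype σ] (f : MvPowerSeries σ R) :
    ∑ G : Finset σ, f.filter (·.support = G) = f := by
  ext b
  simp [map_sum, coeff_filter]

theorem monomial_dvd_filter_support_eq (G : Finset σ) (f : MvPowerSeries σ R) :
    monomial (∑ i ∈ G, Finsupp.single i 1) 1 ∣ f.filter (·.support = G) := by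
  refine monomial_dvd_of_coeff_ne_zero fun a ha => ?_
  rw [coeff_filter] at ha
  split_ifs at ha with hG
  · exact hG ▸ a.sum_support_single_one_le
  · exact absurd rfl ha

noncomputable def killOutside (F : Finset σ) : MvPowerSeries σ R →+* MvPowerSeries σ R :=
  rescale fun i => if i ∈ F then 1 else 0

theorem coeff_killOutside (F : Finset σ) (b : σ →₀ ℕ) (f : MvPowerSeries σ R) :
    coeff b (killOutside F f) = if b.support ⊆ F then coeff b f else 0 := by
  rw [killOutside, coeff_rescale, Finsupp.prod]
  split_ifs with hb
  · rw [prod_eq_one fun i hi => by rw [if_pos (hb hi), one_pow], one_mul]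
  · obtain ⟨i, hi, hiF⟩ := not_subset.mp hb
    rw [prod_eq_zero hi (by rw [if_neg hiF, zero_pow (Finsupp.mem_support_iff.mp hi)]), zero_mul]

theorem killOutside_killOutside (F : Finset σ) (f : MvPowerSeries σ R) :
    killOutside F (killOutside F f) = killOutside F f := by
  ext b
  simp only [coeff_killOutside]
  split_ifs <;> rfl

theorem mem_ker_killOutside {F : Finset σ} {f : MvPowerSeries σ R} :
    f ∈ RingHom.ker (killOutside F) ↔ ∀ b, b.support ⊆ F → coeff b f = 0 := by
  rw [RingHom.mem_ker, MvPowerSeries.ext_iff]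
  refine forall_congr' fun b => ?_
  rw [coeff_killOutside, map_zero]
  split_ifs with hb <;> simp [hb]

theorem killOutside_X (F : Finset σ) (i : σ) :
    killOutside F (X i : MvPowerSeries σ R) = if i ∈ F then X i else 0 := by
  ext b
  rw [coeff_killOutside, coeff_X]
  by_cases hb : b = Finsupp.single i 1
  · subst hb
    split_ifs <;> simp_all
  · split_ifs <;> simp [coeff_X, hb]

theorem subset_of_ker_killOutside_le [Nontrivial R] {F F' : Finset σ}
    (h : RingHom.ker (killOutside F' : MvPowerSeries σ R →+* _) ≤ RingHom.ker (killOutside F)) :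
    F ⊆ F' := by
  intro i hiF
  by_contra hiF'
  have hX := h (show (X i : MvPowerSeries σ R) ∈ RingHom.ker (killOutside F') by
    rw [RingHom.mem_ker, killOutside_X, if_neg hiF'])
  rw [RingHom.mem_ker, killOutside_X, if_pos hiF] at hX
  simpa using congrArg (coeff (Finsupp.single i 1)) hX

end

section Perfect

variable {k : Type*} [CommRing k] (p : ℕ) [ExpChar k p] [PerfectRing k p]

noncomputable def rootComponent (e : ℕ) (u : σ →₀ ℕ) :
    MvPowerSeries σ k →+ MvPowerSeries σ k :=
  (map ((iterateFrobeniusEquiv k p e).symm : k →+* k)).toAddMonoidHom.comp (component (p ^ e) u)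

theorem coeff_rootComponent (e : ℕ) (u b : σ →₀ ℕ) (f : MvPowerSeries σ k) :
    coeff b (rootComponent p e u f) =
      (iterateFrobeniusEquiv k p e).symm (coeff (p ^ e • b + u) f) :=
  rfl

theorem rootComponent_pow_mul {e : ℕ} {u : σ →₀ ℕ} (hu : ∀ i, u i < p ^ e)
    (g f : MvPowerSeries σ k) :
    rootComponent p e u (g ^ p ^ e * f) = g * rootComponent p e u f := by
  have hp : p ≠ 0 := expChar_ne_zero k p
  rw [← map_iterateFrobenius_expand p hp g e]
  simp only [rootComponent, AddMonoidHom.comp_apply]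
  rw [map_expand, component_expand_mul (pow_ne_zero e hp) hu]
  simp only [RingHom.toAddMonoidHom_eq_coe, AddMonoidHom.coe_coe, map_mul]
  congr 1
  ext b
  exact (iterateFrobeniusEquiv k p e).symm_apply_apply _

theorem rootComponent_mem_of_mem_frobeniusPower {e : ℕ} {u : σ →₀ ℕ} (hu : ∀ i, u i < p ^ e)
    {J : Ideal (MvPowerSeries σ k)} {z : MvPowerSeries σ k} (hz : z ∈ frobeniusPower J (p ^ e)) :
    rootComponent p e u z ∈ J := by
  suffices ∀ f, rootComponent p e u (f * z) ∈ J by simpa using this 1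
  induction hz using Submodule.span_induction with
  | mem _ hg =>
    obtain ⟨g, hg, rfl⟩ := hg
    intro f
    rw [mul_comm, rootComponent_pow_mul p hu]
    exact J.mul_mem_right _ hg
  | zero => simp
  | add _ _ _ _ hy hz => intro f; rw [mul_add, map_add]; exact J.add_mem (hy f) (hz f)
  | smul r _ _ hy => intro f; rw [smul_eq_mul, ← mul_assoc]; exact hy (f * r)

end Perfect

theorem mem_of_mul_pow_mem_frobeniusPower {k : Type*} [Field k] (p : ℕ) [Fact p.Prime] [CharP k p]
    [PerfectRing k p] {J : Ideal (MvPowerSeries σ k)}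
    {c x : MvPowerSeries σ k} (hc : c ≠ 0) {N : ℕ}
    (h : ∀ e ≥ N, c * x ^ p ^ e ∈ frobeniusPower J (p ^ e)) : x ∈ J := by
  obtain ⟨u, hu⟩ : ∃ u, coeff u c ≠ 0 := by
    contrapose! hc
    exact ext hc
  set e := N + u.degree
  have hu_lt : ∀ i, u i < p ^ e := fun i =>
    calc u i ≤ e := (u.le_degree i).trans (Nat.le_add_left _ _)
      _ < p ^ e := Nat.lt_pow_self (Fact.out : p.Prime).one_lt
  have hunit : IsUnit (rootComponent p e u c) := by
    rw [isUnit_iff_constantCoeff, ← coeff_zero_eq_constantCoeff_apply, coeff_rootComponent,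
      smul_zero, zero_add, isUnit_iff_ne_zero]
    simpa using hu
  have hmem := rootComponent_mem_of_mem_frobeniusPower p hu_lt (h e (Nat.le_add_right _ _))
  rw [mul_comm, rootComponent_pow_mul p hu_lt] at hmem
  exact (J.mul_unit_mem_iff_mem hunit).mp hmem

end MvPowerSeries

open MvPowerSeries

theorem mem_sup_map_ker_of_inTightClosure {σ k : Type*} [Field k] (p : ℕ) [Fact p.Prime]
    [CharP k p] [PerfectRing k p] {I : Ideal (MvPowerSeries σ k)}
    {φ : MvPowerSeries σ k →+* MvPowerSeries σ k} (hφ : ∀ f, φ (φ f) = φ f)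
    (hI : I ≤ RingHom.ker φ) (hmin : RingHom.ker φ ∈ I.minimalPrimes)
    {J : Ideal (MvPowerSeries σ k ⧸ I)} {x : MvPowerSeries σ k ⧸ I} (hx : InTightClosure p J x) :
    x ∈ J ⊔ (RingHom.ker φ).map (Ideal.Quotient.mk I) := by
  obtain ⟨c, hc, N, hN⟩ := hx
  set φ' := Ideal.Quotient.lift I φ hI
  have hφ' : ∀ a, φ' (Ideal.Quotient.mk I (φ' a)) = φ' a := by
    rintro ⟨a⟩
    exact hφ a
  rw [← Ideal.ker_quotient_lift φ hI]
  refine Ideal.mem_sup_ker_of_map_mem _ hφ' <|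
    mem_of_mul_pow_mem_frobeniusPower p (c := φ' c) (N := N) ?_ fun e he => ?_
  · exact fun h => hc _ (Ideal.ker_quotient_lift_mem_minimalPrimes φ hI hmin) h
  · rw [← map_pow, ← map_mul]
    exact map_frobeniusPower_le φ' J _ (Ideal.mem_map_of_mem φ' (hN e he))

def facets {α : Type*} [DecidableEq α] (Δ : Finset (Finset α)) : Finset (Finset α) :=
  Δ.filter fun F => ∀ G ∈ Δ, F ⊆ G → F = G

section Facets

variable {α : Type*} [DecidableEq α] {Δ : Finset (Finset α)} {F : Finset α}

theorem mem_facets : F ∈ facets Δ ↔ F ∈ Δ ∧ ∀ G ∈ Δ, F ⊆ G → F = G :=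
  mem_filter

theorem exists_mem_facets_superset {G : Finset α} (hG : G ∈ Δ) : ∃ F ∈ facets Δ, G ⊆ F := by
  obtain ⟨F, hGF, hF⟩ := Δ.exists_le_maximal hG
  exact ⟨F, mem_facets.mpr ⟨hF.prop, fun G hG hFG => le_antisymm hFG (hF.2 hG hFG)⟩, hGF⟩

end Facets

section StanleyReisner

variable {k : Type*} [Field k] {n : ℕ} {Δ : Finset (Finset (Fin n))}

theorem stanleyReisnerIdeal_le_ker_killOutside (hΔ : ∀ F ∈ Δ, ∀ G : Finset (Fin n), G ⊆ F → G ∈ Δ)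
    {F : Finset (Fin n)} (hF : F ∈ Δ) : stanleyReisnerIdeal k Δ ≤ RingHom.ker (killOutside F) := by
  rw [stanleyReisnerIdeal, Ideal.span_le]
  rintro _ ⟨G, hG, rfl⟩
  obtain ⟨i, hiG, hiF⟩ := not_subset.mp fun hGF => hG (hΔ F hF G hGF)
  rw [SetLike.mem_coe, RingHom.mem_ker, map_prod]
  exact prod_eq_zero hiG (by rw [killOutside_X, if_neg hiF])

theorem mem_stanleyReisnerIdeal_of_coeff_eq_zero {f : MvPowerSeries (Fin n) k}
    (h : ∀ b, b.support ∈ Δ → coeff b f = 0) : f ∈ stanleyReisnerIdeal k Δ := by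
  rw [← sum_filter_support_eq f]
  refine Ideal.sum_mem _ fun G _ => ?_
  by_cases hG : G ∈ Δ
  · convert (stanleyReisnerIdeal k Δ).zero_mem
    ext b
    rw [coeff_filter, map_zero]
    split_ifs with hb
    · exact h b (hb ▸ hG)
    · rfl
  · obtain ⟨g, hg⟩ := monomial_dvd_filter_support_eq G f
    rw [hg, ← prod_X_eq_monomial]
    exact Ideal.mul_mem_right _ _ (Ideal.subset_span ⟨G, hG, rfl⟩)

theorem mem_stanleyReisnerIdeal_of_forall_killOutside_eq_zero {f : MvPowerSeries (Fin n) k}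
    (h : ∀ F ∈ facets Δ, killOutside F f = 0) : f ∈ stanleyReisnerIdeal k Δ := by
  refine mem_stanleyReisnerIdeal_of_coeff_eq_zero fun b hb => ?_
  obtain ⟨F, hF, hbF⟩ := exists_mem_facets_superset hb
  exact mem_ker_killOutside.mp (h F hF) b hbF

theorem ker_killOutside_mem_minimalPrimes (hΔ : ∀ F ∈ Δ, ∀ G : Finset (Fin n), G ⊆ F → G ∈ Δ)
    {F : Finset (Fin n)} (hF : F ∈ facets Δ) :
    RingHom.ker (killOutside F) ∈ (stanleyReisnerIdeal k Δ).minimalPrimes := by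
  have hFΔ := mem_facets.mp hF
  have := NoZeroDivisors.to_isDomain (MvPowerSeries (Fin n) k)
  refine ⟨⟨RingHom.ker_isPrime _, stanleyReisnerIdeal_le_ker_killOutside hΔ hFΔ.1⟩,
    fun q ⟨hq, hIq⟩ hqF => ?_⟩
  have hinf : (facets Δ).inf (fun F => RingHom.ker (killOutside F)) ≤ q := fun f hf =>
    hIq (mem_stanleyReisnerIdeal_of_forall_killOutside_eq_zero fun F hF =>
      Finset.inf_le (f := fun F => RingHom.ker (killOutside F)) hF hf)
  obtain ⟨F', hF', hF'q⟩ := hq.inf_le'.mp hinf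
  rwa [← hFΔ.2 F' (mem_facets.mp hF').1 (subset_of_ker_killOutside_le (hF'q.trans hqF))] at hF'q

theorem eq_zero_of_forall_mem_map_ker_killOutside
    (hΔ : ∀ F ∈ Δ, ∀ G : Finset (Fin n), G ⊆ F → G ∈ Δ)
    {z : MvPowerSeries (Fin n) k ⧸ stanleyReisnerIdeal k Δ}
    (hz : ∀ F ∈ facets Δ, z ∈ (RingHom.ker (killOutside F)).map (Ideal.Quotient.mk _)) :
    z = 0 := by
  obtain ⟨f, rfl⟩ := Ideal.Quotient.mk_surjective z
  refine Ideal.Quotient.eq_zero_iff_mem.mpr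
    (mem_stanleyReisnerIdeal_of_forall_killOutside_eq_zero fun F hF => ?_)
  have := Ideal.mem_quotient_iff_mem_sup.mp (hz F hF)
  rwa [sup_eq_left.mpr (stanleyReisnerIdeal_le_ker_killOutside hΔ (mem_facets.mp hF).1)] at this

end StanleyReisner

theorem stanley_reisner_is_fmax_tight_general {k : Type*} [Field k] (p : ℕ) [Fact p.Prime]
    [CharP k p] [PerfectRing k p] (n : ℕ)
    (Δ : Finset (Finset (Fin n)))
    (hΔclosed : ∀ F ∈ Δ, ∀ G : Finset (Fin n), G ⊆ F → G ∈ Δ)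
    (m : ℕ) (hm : (Δ.filter fun F => ∀ G ∈ Δ, F ⊆ G → F = G).card = m) :
    ∀ J : Ideal (MvPowerSeries (Fin n) k ⧸ stanleyReisnerIdeal k Δ),
      ∀ x : MvPowerSeries (Fin n) k ⧸ stanleyReisnerIdeal k Δ,
        InTightClosure p J x →
          ∃ a : ℕ → MvPowerSeries (Fin n) k ⧸ stanleyReisnerIdeal k Δ,
            (∀ i, 1 ≤ i → i ≤ m → a i ∈ J ^ i) ∧
            x ^ m + ∑ i ∈ Finset.Icc 1 m, a i * x ^ (m - i) = 0 := by
  intro J x hx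
  have hx_mod : ∀ F ∈ facets Δ, x ∈ J ⊔ (RingHom.ker (killOutside F)).map (Ideal.Quotient.mk _) :=
    fun F hF => mem_sup_map_ker_of_inTightClosure p (killOutside_killOutside F)
      (stanleyReisnerIdeal_le_ker_killOutside hΔclosed (mem_facets.mp hF).1)
      (ker_killOutside_mem_minimalPrimes hΔclosed hF) hx
  choose! y hyJ z hz hyz using fun F hF => Submodule.mem_sup.mp (hx_mod F hF)
  have hprod : ∏ F ∈ facets Δ, (x - y F) = 0 := by
    refine eq_zero_of_forall_mem_map_ker_killOutside hΔclosed fun F hF => Ideal.prod_mem _ hF ?_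
    rw [← hyz F hF, add_sub_cancel_left]
    exact hz F hF
  obtain ⟨a, haJ, ha⟩ := exists_pow_add_sum_eq_prod_sub J x (facets Δ) y hyJ
  -- `facets Δ` and the filter in `hm` differ only in their `Decidable` instances.
  have hcard : #(facets Δ) = m := by rw [← hm]; unfold facets; congr
  exact ⟨a, fun i _ _ => haJ i, hcard ▸ ha ▸ hprod⟩

/-- The Stanley–Reisner ring `R = S/I_Δ` of a simplicial complex `Δ` with
exactly `m` facets is `m`-tight: every element of `J*` satisfies a degree-`m` equation of
integral dependence over `J`, for every ideal `J` of `R`. -/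
theorem stanley_reisner_is_fmax_tight {k : Type*} [Field k] (p : ℕ) [Fact p.Prime]
    [CharP k p] [PerfectRing k p] (n : ℕ)
    (Δ : Finset (Finset (Fin n))) (hΔne : Δ.Nonempty)
    (hΔclosed : ∀ F ∈ Δ, ∀ G : Finset (Fin n), G ⊆ F → G ∈ Δ)
    (m : ℕ) (hm : (Δ.filter fun F => ∀ G ∈ Δ, F ⊆ G → F = G).card = m) :
    ∀ J : Ideal (MvPowerSeries (Fin n) k ⧸ stanleyReisnerIdeal k Δ),
      ∀ x : MvPowerSeries (Fin n) k ⧸ stanleyReisnerIdeal k Δ,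
        InTightClosure p J x →
          ∃ a : ℕ → MvPowerSeries (Fin n) k ⧸ stanleyReisnerIdeal k Δ,
            (∀ i, 1 ≤ i → i ≤ m → a i ∈ J ^ i) ∧
            x ^ m + ∑ i ∈ Finset.Icc 1 m, a i * x ^ (m - i) = 0 :=
  stanley_reisner_is_fmax_tight_general p n Δ hΔclosed m hm
end
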